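/- (Chain-rule total variation bound for approximate conditionals, Proposition 1.) Let X_1, …, X_d be measurable spaces. Let μ_1 and ν_1 be probability measures on X_1, and for each 2 ≤ j ≤ d let κ_j and η_j be Markov kernels from X_1 × ⋯ × X_{j−1} to X_j such that each map x ↦ TV(κ_j(x), η_j(x)) is measurable. Define P_1 = μ_1 and P_j = P_{j−1} ⊗ κ_j for 2 ≤ j ≤ d, and set P = P_d; similarly define Q_1 = ν_1, Q_j = Q_{j−1} ⊗ η_j, and Q = Q_d. Suppose TV(μ_1, ν_1) ≤ ε_1 and, for each 2 ≤ j ≤ d, ∫ TV(κ_j(x), η_j(x)) dP_{j−1}(x) ≤ ε_j. Then TV(P, Q) ≤ ε_1 + ε_2 + ⋯ + ε_d. -/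

import Mathlib

open MeasureTheory ProbabilityTheory

/-! By the triangle inequality,
`TV(P ⊗ κ, Q ⊗ η) ≤ TV(P ⊗ κ, P ⊗ η) + TV(P ⊗ η, Q ⊗ η)`.
Computing `(P ⊗ κ)(A)` as `∫ κ x (A_x) dP(x)`, the first term is at most `∫ TV(κ x, η x) dP(x)`,
and the second is at most `TV(P, Q)`, because the integrals of a `[0, 1]`-valued function against
`P` and `Q` differ by at most the mass of the positive part of `P - Q` on a Hahn set.
Induction on the number of variables then adds up the errors `ε j`. -/

/-- Total variation distance between two measures:
`TV(P,Q) = sup { |P(A) - Q(A)| : A measurable }`. -/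
noncomputable def tvDist {α : Type*} [MeasurableSpace α] (P Q : Measure α) : ℝ :=
  ⨆ A : {s : Set α // MeasurableSet s}, |(P A.1).toReal - (Q A.1).toReal|

/-- `IterProd X n` is the iterated (left-nested) product `X 0 × X 1 × ⋯ × X n`,
modelling the space of the first `n+1` variables. -/
def IterProd (X : ℕ → Type*) : ℕ → Type _
  | 0 => X 0
  | n + 1 => IterProd X n × X (n + 1)

instance iterProdMeasurableSpace (X : ℕ → Type*) [m : ∀ n, MeasurableSpace (X n)] :
    ∀ n, MeasurableSpace (IterProd X n)
  | 0 => m 0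
  | n + 1 => @Prod.instMeasurableSpace _ _ (iterProdMeasurableSpace X n) (m (n + 1))

section TotalVariation

variable {α β : Type*} [MeasurableSpace α] [MeasurableSpace β]

lemma tvDist_comm (P Q : Measure α) : tvDist P Q = tvDist Q P := by
  simp only [tvDist, abs_sub_comm]

lemma tvDist_le_one (P Q : Measure α) [IsProbabilityMeasure P] [IsProbabilityMeasure Q] :
    tvDist P Q ≤ 1 :=
  ciSup_le fun _ => abs_sub_le_of_nonneg_of_le measureReal_nonneg measureReal_le_one
    measureReal_nonneg measureReal_le_one

variable (P Q : Measure α) [IsFiniteMeasure P] [IsFiniteMeasure Q]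

lemma bddAbove_range_abs_sub_measure :
    BddAbove (Set.range fun A : {s : Set α // MeasurableSet s} =>
      |(P A.1).toReal - (Q A.1).toReal|) := by
  refine ⟨P.real Set.univ + Q.real Set.univ, ?_⟩
  rintro _ ⟨A, rfl⟩
  have hP : P.real A.1 ≤ P.real Set.univ := measureReal_mono (Set.subset_univ _)
  have hQ : Q.real A.1 ≤ Q.real Set.univ := measureReal_mono (Set.subset_univ _)
  exact abs_sub_le_of_nonneg_of_le measureReal_nonneg (hP.trans (le_add_of_nonneg_right
    measureReal_nonneg)) measureReal_nonneg (hQ.trans (le_add_of_nonneg_left measureReal_nonneg))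

lemma abs_sub_measure_le_tvDist {s : Set α} (hs : MeasurableSet s) :
    |(P s).toReal - (Q s).toReal| ≤ tvDist P Q :=
  le_ciSup (bddAbove_range_abs_sub_measure P Q) ⟨s, hs⟩

lemma tvDist_nonneg : 0 ≤ tvDist P Q :=
  (abs_nonneg _).trans (abs_sub_measure_le_tvDist P Q MeasurableSet.empty)

lemma tvDist_triangle (R : Measure α) [IsFiniteMeasure R] :
    tvDist P R ≤ tvDist P Q + tvDist Q R :=
  ciSup_le fun A => (abs_sub_le _ _ _).trans <|
    add_le_add (abs_sub_measure_le_tvDist P Q A.2) (abs_sub_measure_le_tvDist Q R A.2)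

lemma exists_le_add_restrict_sub_restrict :
    ∃ s, MeasurableSet s ∧ Q.restrict s ≤ P.restrict s ∧
      P ≤ Q + (P.restrict s - Q.restrict s) := by
  obtain ⟨s, hs, hQP, hPQ⟩ := hahn_decomposition P Q
  have hQPs : Q.restrict s ≤ P.restrict s := Measure.le_iff.2 fun t ht => by
    simpa only [Measure.restrict_apply ht] using hQP _ (ht.inter hs) Set.inter_subset_right
  have hPQsc : P.restrict sᶜ ≤ Q.restrict sᶜ := Measure.le_iff.2 fun t ht => by
    simpa only [Measure.restrict_apply ht] using hPQ _ (ht.inter hs.compl) Set.inter_subset_right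
  refine ⟨s, hs, hQPs, ?_⟩
  calc P = P.restrict s + P.restrict sᶜ := (Measure.restrict_add_restrict_compl hs).symm
    _ ≤ (P.restrict s - Q.restrict s + Q.restrict s) + Q.restrict sᶜ := by
        rw [Measure.sub_add_cancel_of_le hQPs]; exact add_le_add le_rfl hPQsc
    _ = Q + (P.restrict s - Q.restrict s) := by
        rw [add_assoc, Measure.restrict_add_restrict_compl hs, add_comm]

lemma lintegral_toReal_le_add_tvDist {f : α → ENNReal} (hf : ∀ x, f x ≤ 1) :
    (∫⁻ x, f x ∂P).toReal ≤ (∫⁻ x, f x ∂Q).toReal + tvDist P Q := by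
  obtain ⟨s, hs, hQPs, hle⟩ := exists_le_add_restrict_sub_restrict P Q
  have hgap : ∫⁻ x, f x ∂(P.restrict s - Q.restrict s) ≤ P s - Q s := by
    calc ∫⁻ x, f x ∂(P.restrict s - Q.restrict s)
        ≤ (P.restrict s - Q.restrict s) Set.univ := (lintegral_mono hf).trans_eq lintegral_one
      _ = P s - Q s := by
        rw [Measure.sub_apply .univ hQPs, Measure.restrict_apply_univ, Measure.restrict_apply_univ]
  have hbound : ∫⁻ x, f x ∂P ≤ ∫⁻ x, f x ∂Q + (P s - Q s) :=
    (lintegral_mono' hle le_rfl).trans <| by rw [lintegral_add_measure]; gcongr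
  have hQs : Q s ≤ P s := by simpa [Measure.restrict_apply_univ] using hQPs Set.univ
  have hfin : ∫⁻ x, f x ∂Q ≠ ⊤ :=
    ne_top_of_le_ne_top (measure_ne_top Q Set.univ) ((lintegral_mono hf).trans_eq lintegral_one)
  calc (∫⁻ x, f x ∂P).toReal ≤ (∫⁻ x, f x ∂Q).toReal + (P s - Q s).toReal := by
        rw [← ENNReal.toReal_add hfin (by finiteness)]
        exact ENNReal.toReal_mono (by finiteness) hbound
    _ ≤ (∫⁻ x, f x ∂Q).toReal + tvDist P Q := by
        rw [ENNReal.toReal_sub_of_le hQs (measure_ne_top P s)]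
        exact add_le_add le_rfl ((le_abs_self _).trans (abs_sub_measure_le_tvDist P Q hs))

lemma abs_lintegral_toReal_sub_le_tvDist {f : α → ENNReal} (hf : ∀ x, f x ≤ 1) :
    |(∫⁻ x, f x ∂P).toReal - (∫⁻ x, f x ∂Q).toReal| ≤ tvDist P Q := by
  have h₁ := lintegral_toReal_le_add_tvDist P Q hf
  have h₂ := lintegral_toReal_le_add_tvDist Q P hf
  rw [tvDist_comm] at h₂
  exact abs_sub_le_iff.2 ⟨by linarith, by linarith⟩

lemma tvDist_compProd_left_le (η : Kernel α β) [IsMarkovKernel η] :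
    tvDist (P ⊗ₘ η) (Q ⊗ₘ η) ≤ tvDist P Q :=
  ciSup_le fun ⟨A, hA⟩ => by
    simp only [Measure.compProd_apply hA]
    exact abs_lintegral_toReal_sub_le_tvDist P Q fun _ => prob_le_one

lemma tvDist_compProd_right_le (κ η : Kernel α β) [IsMarkovKernel κ] [IsMarkovKernel η]
    (hmeas : Measurable fun x => tvDist (κ x) (η x)) :
    tvDist (P ⊗ₘ κ) (P ⊗ₘ η) ≤ ∫ x, tvDist (κ x) (η x) ∂P := by
  refine ciSup_le fun ⟨A, hA⟩ => ?_
  have toReal_compProd (ξ : Kernel α β) [IsMarkovKernel ξ] :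
      ((P ⊗ₘ ξ) A).toReal = ∫ x, (ξ x).real (Prod.mk x ⁻¹' A) ∂P := by
    rw [Measure.compProd_apply hA, ← integral_toReal
      (Kernel.measurable_kernel_prodMk_left (κ := ξ) hA).aemeasurable
      (.of_forall fun _ => measure_lt_top _ _)]
    rfl
  have integrable_real (ξ : Kernel α β) [IsMarkovKernel ξ] :
      Integrable (fun x => (ξ x).real (Prod.mk x ⁻¹' A)) P :=
    .of_bound (Kernel.measurable_kernel_prodMk_left hA).ennreal_toReal.aestronglyMeasurable 1
      (.of_forall fun _ => by simp [abs_of_nonneg measureReal_nonneg, measureReal_le_one])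
  have integrable_tvDist : Integrable (fun x => tvDist (κ x) (η x)) P :=
    .of_bound hmeas.aestronglyMeasurable 1
      (.of_forall fun _ => by simp [abs_of_nonneg (tvDist_nonneg _ _), tvDist_le_one])
  calc |((P ⊗ₘ κ) A).toReal - ((P ⊗ₘ η) A).toReal|
      = |∫ x, ((κ x).real (Prod.mk x ⁻¹' A) - (η x).real (Prod.mk x ⁻¹' A)) ∂P| := by
        rw [toReal_compProd, toReal_compProd, integral_sub (integrable_real κ) (integrable_real η)]
    _ ≤ ∫ x, |(κ x).real (Prod.mk x ⁻¹' A) - (η x).real (Prod.mk x ⁻¹' A)| ∂P :=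
        abs_integral_le_integral_abs
    _ ≤ ∫ x, tvDist (κ x) (η x) ∂P :=
        integral_mono ((integrable_real κ).sub (integrable_real η)).abs integrable_tvDist
          fun x => abs_sub_measure_le_tvDist _ _ (measurable_prodMk_left hA)

lemma tvDist_compProd_le (κ η : Kernel α β) [IsMarkovKernel κ] [IsMarkovKernel η]
    (hmeas : Measurable fun x => tvDist (κ x) (η x)) :
    tvDist (P ⊗ₘ κ) (Q ⊗ₘ η) ≤ tvDist P Q + ∫ x, tvDist (κ x) (η x) ∂P :=
  calc tvDist (P ⊗ₘ κ) (Q ⊗ₘ η) ≤ tvDist (P ⊗ₘ κ) (P ⊗ₘ η) + tvDist (P ⊗ₘ η) (Q ⊗ₘ η) :=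
        tvDist_triangle _ _ _
    _ ≤ tvDist P Q + ∫ x, tvDist (κ x) (η x) ∂P := by
        rw [add_comm]
        exact add_le_add (tvDist_compProd_left_le P Q η) (tvDist_compProd_right_le P κ η hmeas)

end TotalVariation

/-- Chain-rule TV bound, Proposition 1: with `X 0, …, X (d-1)` the `d`
variables, `μ, ν` the initial laws, `κ n, η n` the Markov kernels giving the conditional
of variable `n+1` given the first `n+1` variables, and `P n, Q n` the induced joint laws
of the first `n+1` variables, if `TV(μ, ν) ≤ ε 0` and the expected conditional TV at each
step `j ≥ 1` is at most `ε j`, then `TV(P, Q) ≤ ε 0 + ⋯ + ε (d-1)` for the full joints. -/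
theorem chain_rule_tv_bound (X : ℕ → Type*) [∀ n, MeasurableSpace (X n)]
    (d : ℕ) (hd : 1 ≤ d)
    (μ ν : Measure (X 0)) [IsProbabilityMeasure μ] [IsProbabilityMeasure ν]
    (κ η : ∀ n, Kernel (IterProd X n) (X (n + 1)))
    [∀ n, IsMarkovKernel (κ n)] [∀ n, IsMarkovKernel (η n)]
    (hmeas : ∀ n, Measurable fun x => tvDist (κ n x) (η n x))
    (P Q : ∀ n, Measure (IterProd X n))
    (hP0 : P 0 = μ) (hPsucc : ∀ n, P (n + 1) = (P n) ⊗ₘ (κ n))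
    (hQ0 : Q 0 = ν) (hQsucc : ∀ n, Q (n + 1) = (Q n) ⊗ₘ (η n))
    (ε : ℕ → ℝ)
    (hε0 : tvDist μ ν ≤ ε 0)
    (hεsucc : ∀ n, n + 1 < d → ∫ x, tvDist (κ n x) (η n x) ∂(P n) ≤ ε (n + 1)) :
    tvDist (P (d - 1)) (Q (d - 1)) ≤ ∑ j ∈ Finset.range d, ε j := by
  have isProbability : ∀ n, IsProbabilityMeasure (P n) ∧ IsProbabilityMeasure (Q n) := by
    intro n
    induction n with
    | zero => rw [hP0, hQ0]; exact ⟨‹_›, ‹_›⟩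
    | succ n ih =>
      obtain ⟨_, _⟩ := ih
      rw [hPsucc, hQsucc]
      -- `inferInstanceAs`: the goal's σ-algebra is `iterProdMeasurableSpace X (n + 1)`, which
      -- matches the product σ-algebra only after unfolding
      exact ⟨inferInstanceAs (IsProbabilityMeasure (P n ⊗ₘ κ n)),
        inferInstanceAs (IsProbabilityMeasure (Q n ⊗ₘ η n))⟩
  have partial_bound : ∀ m < d, tvDist (P m) (Q m) ≤ ∑ j ∈ Finset.range (m + 1), ε j := by
    intro m hm
    induction m with
    | zero => rw [Finset.sum_range_one, hP0, hQ0]; exact hε0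
    | succ m ih =>
      obtain ⟨_, _⟩ := isProbability m
      rw [hPsucc, hQsucc, Finset.sum_range_succ]
      exact (tvDist_compProd_le _ _ _ _ (hmeas m)).trans
        (add_le_add (ih (by omega)) (hεsucc m hm))
  simpa [Nat.sub_add_cancel hd] using partial_bound (d - 1) (by omega)
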